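/- Let G be a finite simple graph, let R and S be disjoint subsets of V(G), and let T = R ∪ S. Let ρ be a fall R-type and σ a fall S-type that are fall-compatible, and let τ be their fall merge type. Then for every independent set C_R ⊆ R of G[R] that is fall-valid in R with fall R-type ρ, and every independent set C_S ⊆ S of G[S] that is fall-valid in S with fall S-type σ, the set C_R ∪ C_S is an independent set of G[T], is fall-valid in T, and its fall T-type is τ. -/

import Mathlib

open scoped Classical

namespace FallCol

/-- The three possible descriptions of a color class on an equivalence class:
`none`, `contains`, or `demand`. -/
inductive Desc where
  | none
  | contains
  | demand
deriving DecidableEq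

variable {V : Type*}

/-- The neighborhood of `v` outside of `U`, i.e. `N_G(v) \ U`. -/
def extN (G : SimpleGraph V) (U : Set V) (v : V) : Set V := G.neighborSet v \ U

/-- The `~_U`-equivalence class of `u`: the vertices of `U` with the same
neighborhood outside of `U` as `u`. -/
def cls (G : SimpleGraph V) (U : Set V) (u : V) : Set V :=
  {v | v ∈ U ∧ extN G U v = extN G U u}

/-- The set of equivalence classes `U/~_U`. -/
def eqClasses (G : SimpleGraph V) (U : Set V) : Set (Set V) :=
  {Q | ∃ u ∈ U, Q = cls G U u}

/-- The equivalence classes of `~_U`, as a type. -/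
abbrev Classes (G : SimpleGraph V) (U : Set V) := {Q // Q ∈ eqClasses G U}

/-- A fall `U`-type: a map `U/~_U → {none, contains, demand}`. -/
abbrev FallType (G : SimpleGraph V) (U : Set V) := Classes G U → Desc

/-- The neighborhood of `v` in the induced subgraph `G[U]`. -/
def indN (G : SimpleGraph V) (U : Set V) (v : V) : Set V := G.neighborSet v ∩ U

/-- `C` is an independent set of the induced subgraph `G[U]`. -/
def IndepIn (G : SimpleGraph V) (U C : Set V) : Prop :=
  C ⊆ U ∧ ∀ u ∈ C, ∀ v ∈ C, ¬ G.Adj u v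

/-- The fall `U`-type of the color class `C`. -/
noncomputable def fallTypeOf (G : SimpleGraph V) (U C : Set V) : FallType G U :=
  fun Q =>
    if (Q.1 ∩ C).Nonempty then Desc.contains
    else if ∃ v ∈ Q.1, indN G U v ∩ C = ∅ then Desc.demand
    else Desc.none

/-- `C` is fall-valid in `U`: there is no class `Q ∈ U/~_U` intersecting `C` such that
some vertex of `Q \ C` has open neighborhood in `G[U]` disjoint from `C`. -/
def FallValid (G : SimpleGraph V) (U C : Set V) : Prop :=
  ¬ ∃ Q ∈ eqClasses G U, (Q ∩ C).Nonempty ∧ ∃ v ∈ Q \ C, indN G U v ∩ C = ∅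

/-- `Q_R Q_S ∈ E(H)`: every vertex of `Q_R` is adjacent to every vertex of `Q_S`. -/
def OpEdge (G : SimpleGraph V) (QR QS : Set V) : Prop :=
  ∀ u ∈ QR, ∀ v ∈ QS, G.Adj u v

/-- A fall `R`-type `ρ` and a fall `S`-type `σ` are fall-compatible. -/
def FallCompatible (G : SimpleGraph V) (R S : Set V)
    (ρ : FallType G R) (σ : FallType G S) : Prop :=
  (¬ ∃ (QR : Classes G R) (QS : Classes G S),
      OpEdge G QR.1 QS.1 ∧ ρ QR = Desc.contains ∧ σ QS = Desc.contains) ∧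
  (∀ Q : Classes G (R ∪ S),
    ((∃ QR : Classes G R, QR.1 ⊆ Q.1 ∧ ρ QR = Desc.contains) ∨
     (∃ QS : Classes G S, QS.1 ⊆ Q.1 ∧ σ QS = Desc.contains)) →
    ((∀ QR : Classes G R, QR.1 ⊆ Q.1 → ρ QR = Desc.demand →
        ∃ QS : Classes G S, σ QS = Desc.contains ∧ OpEdge G QR.1 QS.1) ∧
     (∀ QS : Classes G S, QS.1 ⊆ Q.1 → σ QS = Desc.demand →
        ∃ QR : Classes G R, ρ QR = Desc.contains ∧ OpEdge G QR.1 QS.1)))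

/-- The fall merge type of a fall `R`-type `ρ` and a fall `S`-type `σ`. -/
noncomputable def fallMergeType (G : SimpleGraph V) (R S : Set V)
    (ρ : FallType G R) (σ : FallType G S) : FallType G (R ∪ S) :=
  fun Q =>
    if (∃ QR : Classes G R, QR.1 ⊆ Q.1 ∧ ρ QR = Desc.contains) ∨
       (∃ QS : Classes G S, QS.1 ⊆ Q.1 ∧ σ QS = Desc.contains) then
      Desc.contains
    else if (∃ QR : Classes G R, QR.1 ⊆ Q.1 ∧ ρ QR = Desc.demand ∧
              ∀ QS : Classes G S, OpEdge G QR.1 QS.1 → σ QS ≠ Desc.contains) ∨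
            (∃ QS : Classes G S, QS.1 ⊆ Q.1 ∧ σ QS = Desc.demand ∧
              ∀ QR : Classes G R, OpEdge G QR.1 QS.1 → ρ QR ≠ Desc.contains) then
      Desc.demand
    else Desc.none

/-!
The `~_R`-class of a vertex `v ∈ R` has a common neighbourhood outside `R`, so the neighbours of `v`
in `C_S` are seen exactly by the `H`-edges from that class to `S`-classes of type `contains`;
likewise for `v ∈ S`. Hence whether a `~_T`-class meets `C_R ∪ C_S`, or contains a vertex without
neighbours in it, is decided by its `~_R`- and `~_S`-subclasses exactly as in the merge type.
Compatibility (1) forbids edges between `C_R` and `C_S`, and (2) provides, inside a class meeting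
`C_R ∪ C_S`, the neighbour in `C_S` (or `C_R`) that fall-validity of the union asks for.
-/

section Merge

variable {G : SimpleGraph V} {U W T C : Set V} {u v w : V}

lemma mem_cls_self (hu : u ∈ U) : u ∈ cls G U u := ⟨hu, rfl⟩

def classOf (G : SimpleGraph V) (hu : u ∈ U) : Classes G U := ⟨cls G U u, u, hu, rfl⟩

lemma subset_of_mem_eqClasses {Q : Set V} (hQ : Q ∈ eqClasses G U) : Q ⊆ U := by
  obtain ⟨u, -, rfl⟩ := hQ
  exact fun _ hv => hv.1

lemma cls_eq_of_mem (Q : Classes G U) (hv : v ∈ Q.1) : cls G U v = Q.1 := by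
  obtain ⟨u, -, hQ⟩ := Q.2
  rw [hQ] at hv ⊢
  unfold cls
  rw [hv.2]

lemma extN_eq_of_subset (hUT : U ⊆ T) (h : extN G U u = extN G U v) :
    extN G T u = extN G T v := by
  have hdiff : ∀ x, extN G T x = extN G U x \ T := fun x => by
    rw [extN, extN, Set.sdiff_sdiff, Set.union_eq_self_of_subset_left hUT]
  rw [hdiff, hdiff, h]

lemma cls_subset_of_mem (hUT : U ⊆ T) (Q : Classes G T) (hu : u ∈ Q.1) : cls G U u ⊆ Q.1 := by
  rw [← cls_eq_of_mem Q hu]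
  exact fun _ hx => ⟨hUT hx.1, extN_eq_of_subset hUT hx.2⟩

lemma opEdge_comm {A B : Set V} : OpEdge G A B ↔ OpEdge G B A :=
  ⟨fun h b hb a ha => (h a ha b hb).symm, fun h a ha b hb => (h b hb a ha).symm⟩

lemma opEdge_cls_of_adj (hUW : Disjoint U W) (hw : w ∈ W) (h : G.Adj u w) :
    OpEdge G (cls G U u) (cls G W w) := by
  intro u' hu' w' hw'
  have hwu' : w ∈ extN G U u' := hu'.2 ▸ ⟨h, Set.disjoint_right.mp hUW hw⟩
  have hu'w' : u' ∈ extN G W w' := hw'.2 ▸ ⟨hwu'.1.symm, Set.disjoint_left.mp hUW hu'.1⟩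
  exact hu'w'.1.symm

lemma indN_inter_of_subset (hC : C ⊆ U) (v : V) : indN G U v ∩ C = G.neighborSet v ∩ C := by
  rw [indN, Set.inter_assoc, Set.inter_eq_right.mpr hC]

lemma fallTypeOf_eq_contains_iff (Q : Classes G U) :
    fallTypeOf G U C Q = .contains ↔ (Q.1 ∩ C).Nonempty := by
  unfold fallTypeOf
  split_ifs <;> simp_all

lemma fallTypeOf_eq_demand_iff (hC : C ⊆ U) (Q : Classes G U) :
    fallTypeOf G U C Q = .demand ↔
      ¬(Q.1 ∩ C).Nonempty ∧ ∃ v ∈ Q.1, G.neighborSet v ∩ C = ∅ := by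
  simp only [fallTypeOf, indN_inter_of_subset hC]
  split_ifs <;> simp_all

lemma FallValid.fallTypeOf_classOf_eq_demand (hval : FallValid G U C) (hC : C ⊆ U) (hv : v ∈ U)
    (hvC : v ∉ C) (hN : G.neighborSet v ∩ C = ∅) :
    fallTypeOf G U C (classOf G hv) = .demand := by
  refine (fallTypeOf_eq_demand_iff hC _).mpr ⟨fun hne => hval ?_, v, mem_cls_self hv, hN⟩
  exact ⟨_, (classOf G hv).2, hne, v, ⟨mem_cls_self hv, hvC⟩, by rwa [indN_inter_of_subset hC]⟩

lemma neighborSet_inter_eq_empty_iff (hUW : Disjoint U W) (hC : C ⊆ W) (hv : v ∈ U) :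
    G.neighborSet v ∩ C = ∅ ↔
      ∀ QW : Classes G W, OpEdge G (cls G U v) QW.1 → fallTypeOf G W C QW ≠ .contains := by
  simp only [ne_eq, fallTypeOf_eq_contains_iff, Set.eq_empty_iff_forall_notMem]
  constructor
  · rintro hN QW hop ⟨w, hwQ, hwC⟩
    exact hN w ⟨hop v (mem_cls_self hv) w hwQ, hwC⟩
  · rintro h w ⟨hvw, hwC⟩
    exact h (classOf G (hC hwC)) (opEdge_cls_of_adj hUW (hC hwC) hvw)
      ⟨w, mem_cls_self (hC hwC), hwC⟩

lemma exists_fallTypeOf_contains_iff (hUT : U ⊆ T) (hC : C ⊆ U) (Q : Classes G T) :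
    (∃ QU : Classes G U, QU.1 ⊆ Q.1 ∧ fallTypeOf G U C QU = .contains) ↔ (Q.1 ∩ C).Nonempty := by
  simp only [fallTypeOf_eq_contains_iff]
  constructor
  · rintro ⟨QU, hsub, u, hu, huC⟩
    exact ⟨u, hsub hu, huC⟩
  · rintro ⟨u, hu, huC⟩
    exact ⟨classOf G (hC huC), cls_subset_of_mem hUT Q hu, u, mem_cls_self (hC huC), huC⟩

lemma exists_fallTypeOf_demand_iff (hUT : U ⊆ T) (hC : C ⊆ U) (Q : Classes G T)
    (hQ : ¬(Q.1 ∩ C).Nonempty) (P : Set V → Prop) :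
    (∃ v ∈ Q.1 ∩ U, G.neighborSet v ∩ C = ∅ ∧ P (cls G U v)) ↔
      ∃ QU : Classes G U, QU.1 ⊆ Q.1 ∧ fallTypeOf G U C QU = .demand ∧ P QU.1 := by
  simp only [fallTypeOf_eq_demand_iff hC]
  constructor
  · rintro ⟨v, ⟨hvQ, hvU⟩, hN, hP⟩
    have hsub := cls_subset_of_mem hUT Q hvQ
    exact ⟨classOf G hvU, hsub, ⟨fun hne => hQ (hne.mono (Set.inter_subset_inter_left C hsub)),
      v, mem_cls_self hvU, hN⟩, hP⟩
  · rintro ⟨QU, hsub, ⟨-, v, hv, hN⟩, hP⟩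
    refine ⟨v, ⟨hsub hv, subset_of_mem_eqClasses QU.2 hv⟩, hN, ?_⟩
    rwa [cls_eq_of_mem QU hv]

variable {R S CR CS : Set V}

lemma IndepIn.union (hR : IndepIn G R CR) (hS : IndepIn G S CS)
    (hcross : ∀ u ∈ CR, ∀ w ∈ CS, ¬G.Adj u w) : IndepIn G (R ∪ S) (CR ∪ CS) := by
  refine ⟨Set.union_subset_union hR.1 hS.1, ?_⟩
  rintro u (hu | hu) v (hv | hv)
  · exact hR.2 u hu v hv
  · exact hcross u hu v hv
  · exact fun h => hcross v hv u hu h.symm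
  · exact hS.2 u hu v hv

lemma not_adj_of_fallCompatible (hRS : Disjoint R S)
    (hcomp : FallCompatible G R S (fallTypeOf G R CR) (fallTypeOf G S CS))
    (hCR : CR ⊆ R) (hCS : CS ⊆ S) : ∀ u ∈ CR, ∀ w ∈ CS, ¬G.Adj u w := by
  intro u hu w hw huw
  exact hcomp.1 ⟨classOf G (hCR hu), classOf G (hCS hw),
    opEdge_cls_of_adj hRS (hCS hw) huw,
    (fallTypeOf_eq_contains_iff _).mpr ⟨u, mem_cls_self (hCR hu), hu⟩,
    (fallTypeOf_eq_contains_iff _).mpr ⟨w, mem_cls_self (hCS hw), hw⟩⟩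

lemma class_inter_union_nonempty_iff (hCR : CR ⊆ R) (hCS : CS ⊆ S) (Q : Classes G (R ∪ S)) :
    (Q.1 ∩ (CR ∪ CS)).Nonempty ↔
      (∃ QR : Classes G R, QR.1 ⊆ Q.1 ∧ fallTypeOf G R CR QR = .contains) ∨
      (∃ QS : Classes G S, QS.1 ⊆ Q.1 ∧ fallTypeOf G S CS QS = .contains) := by
  rw [exists_fallTypeOf_contains_iff Set.subset_union_left hCR,
    exists_fallTypeOf_contains_iff Set.subset_union_right hCS, Set.inter_union_distrib_left,
    Set.union_nonempty]

lemma exists_neighborSet_inter_union_eq_empty_iff (hRS : Disjoint R S) (hCR : CR ⊆ R)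
    (hCS : CS ⊆ S) (Q : Classes G (R ∪ S)) (hQ : ¬(Q.1 ∩ (CR ∪ CS)).Nonempty) :
    (∃ v ∈ Q.1, G.neighborSet v ∩ (CR ∪ CS) = ∅) ↔
      (∃ QR : Classes G R, QR.1 ⊆ Q.1 ∧ fallTypeOf G R CR QR = .demand ∧
        ∀ QS : Classes G S, OpEdge G QR.1 QS.1 → fallTypeOf G S CS QS ≠ .contains) ∨
      (∃ QS : Classes G S, QS.1 ⊆ Q.1 ∧ fallTypeOf G S CS QS = .demand ∧
        ∀ QR : Classes G R, OpEdge G QR.1 QS.1 → fallTypeOf G R CR QR ≠ .contains) := by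
  rw [Set.inter_union_distrib_left, Set.union_nonempty, not_or] at hQ
  refine Iff.trans ?_ (or_congr
    (exists_fallTypeOf_demand_iff Set.subset_union_left hCR Q hQ.1
      fun QR => ∀ QS : Classes G S, OpEdge G QR QS.1 → fallTypeOf G S CS QS ≠ .contains)
    (exists_fallTypeOf_demand_iff Set.subset_union_right hCS Q hQ.2
      fun QS => ∀ QR : Classes G R, OpEdge G QR.1 QS → fallTypeOf G R CR QR ≠ .contains))
  simp only [Set.inter_union_distrib_left, Set.union_empty_iff]
  constructor
  · rintro ⟨v, hvQ, hNR, hNS⟩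
    rcases subset_of_mem_eqClasses Q.2 hvQ with hvR | hvS
    · exact Or.inl ⟨v, ⟨hvQ, hvR⟩, hNR, (neighborSet_inter_eq_empty_iff hRS hCS hvR).mp hNS⟩
    · refine Or.inr ⟨v, ⟨hvQ, hvS⟩, hNS, fun QR hop => ?_⟩
      exact (neighborSet_inter_eq_empty_iff hRS.symm hCR hvS).mp hNR QR (opEdge_comm.mp hop)
  · rintro (⟨v, ⟨hvQ, hvR⟩, hNR, hop⟩ | ⟨v, ⟨hvQ, hvS⟩, hNS, hop⟩)
    · exact ⟨v, hvQ, hNR, (neighborSet_inter_eq_empty_iff hRS hCS hvR).mpr hop⟩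
    · refine ⟨v, hvQ, (neighborSet_inter_eq_empty_iff hRS.symm hCR hvS).mpr ?_, hNS⟩
      exact fun QR hop' => hop QR (opEdge_comm.mp hop')

lemma fallValid_union (hRS : Disjoint R S)
    (hcomp : FallCompatible G R S (fallTypeOf G R CR) (fallTypeOf G S CS))
    (hCR : CR ⊆ R) (hCS : CS ⊆ S) (hR : FallValid G R CR) (hS : FallValid G S CS) :
    FallValid G (R ∪ S) (CR ∪ CS) := by
  rintro ⟨Q, hQ, hne, v, ⟨hvQ, hvC⟩, hN⟩
  rw [indN_inter_of_subset (Set.union_subset_union hCR hCS), Set.inter_union_distrib_left,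
    Set.union_empty_iff] at hN
  obtain ⟨hdemR, hdemS⟩ := hcomp.2 ⟨Q, hQ⟩ ((class_inter_union_nonempty_iff hCR hCS _).mp hne)
  rcases subset_of_mem_eqClasses hQ hvQ with hvR | hvS
  · obtain ⟨QS, hQS, hop⟩ := hdemR (classOf G hvR)
      (cls_subset_of_mem Set.subset_union_left ⟨Q, hQ⟩ hvQ)
      (hR.fallTypeOf_classOf_eq_demand hCR hvR (fun h => hvC (Or.inl h)) hN.1)
    exact (neighborSet_inter_eq_empty_iff hRS hCS hvR).mp hN.2 QS hop hQS
  · obtain ⟨QR, hQR, hop⟩ := hdemS (classOf G hvS)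
      (cls_subset_of_mem Set.subset_union_right ⟨Q, hQ⟩ hvQ)
      (hS.fallTypeOf_classOf_eq_demand hCS hvS (fun h => hvC (Or.inr h)) hN.2)
    exact (neighborSet_inter_eq_empty_iff hRS.symm hCR hvS).mp hN.1 QR (opEdge_comm.mp hop) hQR

lemma fallTypeOf_union (hRS : Disjoint R S) (hCR : CR ⊆ R) (hCS : CS ⊆ S) :
    fallTypeOf G (R ∪ S) (CR ∪ CS) =
      fallMergeType G R S (fallTypeOf G R CR) (fallTypeOf G S CS) := by
  funext Q
  rw [fallTypeOf.eq_1 G (R ∪ S)]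
  dsimp only [fallMergeType]
  simp only [indN_inter_of_subset (Set.union_subset_union hCR hCS)]
  exact ite_congr (propext (class_inter_union_nonempty_iff hCR hCS Q)) (fun _ => rfl)
    fun hQ => if_congr (exists_neighborSet_inter_union_eq_empty_iff hRS hCR hCS Q
      ((not_congr (class_inter_union_nonempty_iff hCR hCS Q)).mpr hQ)) rfl rfl

end Merge

theorem merge_fall_types_general {V : Type*} (G : SimpleGraph V)
    (R S : Set V) (hRS : Disjoint R S)
    (ρ : FallType G R) (σ : FallType G S) (hcomp : FallCompatible G R S ρ σ)
    (CR CS : Set V)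
    (hCRind : IndepIn G R CR) (hCRvalid : FallValid G R CR)
    (hCRtype : fallTypeOf G R CR = ρ)
    (hCSind : IndepIn G S CS) (hCSvalid : FallValid G S CS)
    (hCStype : fallTypeOf G S CS = σ) :
    IndepIn G (R ∪ S) (CR ∪ CS) ∧
    FallValid G (R ∪ S) (CR ∪ CS) ∧
    fallTypeOf G (R ∪ S) (CR ∪ CS) = fallMergeType G R S ρ σ := by
  subst hCRtype hCStype
  exact ⟨hCRind.union hCSind (not_adj_of_fallCompatible hRS hcomp hCRind.1 hCSind.1),
    fallValid_union hRS hcomp hCRind.1 hCSind.1 hCRvalid hCSvalid,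
    fallTypeOf_union hRS hCRind.1 hCSind.1⟩

/-- Merging fall types. Let `R, S` be disjoint vertex subsets of a finite graph `G` and
`T = R ∪ S`. If `ρ` is a fall `R`-type and `σ` a fall `S`-type which are
fall-compatible, then for every fall-valid independent set `C_R ⊆ R` of `G[R]` of fall
`R`-type `ρ` and every fall-valid independent set `C_S ⊆ S` of `G[S]` of fall `S`-type
`σ`, the union `C_R ∪ C_S` is an independent set of `G[T]`, is fall-valid in `T`, and
its fall `T`-type is the fall merge type of `ρ` and `σ`. -/
theorem merge_fall_types {V : Type*} [Fintype V] [DecidableEq V] (G : SimpleGraph V)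
    (R S : Set V) (hRS : Disjoint R S)
    (ρ : FallType G R) (σ : FallType G S) (hcomp : FallCompatible G R S ρ σ)
    (CR CS : Set V)
    (hCRind : IndepIn G R CR) (hCRvalid : FallValid G R CR)
    (hCRtype : fallTypeOf G R CR = ρ)
    (hCSind : IndepIn G S CS) (hCSvalid : FallValid G S CS)
    (hCStype : fallTypeOf G S CS = σ) :
    IndepIn G (R ∪ S) (CR ∪ CS) ∧
    FallValid G (R ∪ S) (CR ∪ CS) ∧
    fallTypeOf G (R ∪ S) (CR ∪ CS) = fallMergeType G R S ρ σ :=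
  merge_fall_types_general G R S hRS ρ σ hcomp CR CS hCRind hCRvalid hCRtype hCSind hCSvalid hCStype

end FallCol
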